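/- arXiv:2006.14111 — 3 statements merged into one kernel-verified Lean document; each statement's English description precedes it below -/
import Mathlib

section
/- Davies-type carré-du-champ bound: there exists a constant c > 0, depending only on d, Λ and the constants in (WS), such that for all β > 0, λ > 0, every function χ : ℝ^d → ℝ with |χ(η) − χ(ζ)| ≤ (β/3)|η − ζ| for all η, ζ ∈ ℝ^d, and every ξ ∈ ℝ^d: Σ_{i=1}^d ∫_{|h| ≤ λ} (e^{χ(ξ + h e^i) − χ(ξ)} − 1)² J(ξ, ξ + h e^i) dh ≤ c e^{βλ}/φ(λ). -/
/-!
Along the direction `eᵢ` the Lipschitz bound gives `|χ(ξ + h eᵢ) − χ(ξ)| ≤ β|h|/3`, hence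
`(e^u − 1)² ≤ u² e^{2|u|} ≤ (β/3)² h² e^{2βλ/3}` for `|h| ≤ λ`, while the upper weak scaling of `φ`
turns the kernel bound into `J(ξ, ξ + h eᵢ) ≤ Λ C̄ λ^{α̅} |h|^{-1-α̅} / φ(λ)`. The product is of
order `|h|^{1-α̅}`, integrable because `α̅ < 2`, and integrating it leaves
`(βλ)² e^{2βλ/3} / ((2 − α̅) φ(λ))`, which is absorbed by `(βλ)² ≤ 36 e^{βλ/3}`.
-/

open MeasureTheory Set Real Function
open scoped ENNReal

lemma abs_exp_sub_one_le_abs_mul_exp_abs (u : ℝ) : |exp u - 1| ≤ |u| * exp |u| := by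
  rcases le_total 0 u with hu | hu
  · rw [abs_of_nonneg hu, abs_of_nonneg (by linarith [one_le_exp hu])]
    nlinarith [one_sub_le_exp_neg u, exp_pos u, exp_neg u, mul_inv_cancel₀ (exp_pos u).ne']
  · rw [abs_of_nonpos hu, abs_of_nonpos (by linarith [exp_le_one_iff.2 hu])]
    nlinarith [add_one_le_exp u, one_le_exp (neg_nonneg.2 hu)]

lemma sq_le_four_mul_exp {x : ℝ} (hx : 0 ≤ x) : x ^ 2 ≤ 4 * exp x := by
  have h := add_one_le_exp (x / 2)
  have hsq : exp (x / 2) ^ 2 = exp x := by rw [← exp_nat_mul]; ring_nf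
  nlinarith

lemma intervalIntegrable_abs_rpow {p : ℝ} (hp : -1 < p) (a b : ℝ) :
    IntervalIntegrable (fun x : ℝ => |x| ^ p) volume a b := by
  suffices h : ∀ c, 0 ≤ c → IntervalIntegrable (fun x : ℝ => |x| ^ p) volume 0 c by
    have h' : ∀ c, IntervalIntegrable (fun x : ℝ => |x| ^ p) volume 0 c := by
      intro c
      rcases le_total 0 c with hc | hc
      · exact h c hc
      · simpa using (IntervalIntegrable.iff_comp_neg (f := fun x : ℝ => |x| ^ p)).1
          (h (-c) (neg_nonneg.2 hc))
    exact (h' a).symm.trans (h' b)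
  intro c hc
  refine (intervalIntegral.intervalIntegrable_rpow' hp).congr fun x hx => ?_
  rw [uIoc_of_le hc] at hx
  simp [abs_of_pos hx.1]

lemma integral_abs_rpow_neg_self {p lam : ℝ} (hp : -1 < p) (hl : 0 ≤ lam) :
    ∫ x in -lam..lam, |x| ^ p = 2 * (lam ^ (p + 1) / (p + 1)) := by
  have hpos : ∫ x in (0 : ℝ)..lam, |x| ^ p = lam ^ (p + 1) / (p + 1) := by
    rw [intervalIntegral.integral_congr (g := fun x : ℝ => x ^ p) fun x hx => ?_,
      integral_rpow (Or.inl hp), zero_rpow (by linarith), sub_zero]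
    rw [uIcc_of_le hl] at hx
    simp [abs_of_nonneg hx.1]
  have hneg : ∫ x in -lam..0, |x| ^ p = ∫ x in (0 : ℝ)..lam, |x| ^ p := by
    simpa using (intervalIntegral.integral_comp_neg (a := 0) (b := lam) fun x : ℝ => |x| ^ p).symm
  rw [← intervalIntegral.integral_add_adjacent_intervals (intervalIntegrable_abs_rpow hp _ _)
    (intervalIntegrable_abs_rpow hp _ _), hneg, hpos]
  ring

lemma lintegral_abs_rpow_abs_le {p lam : ℝ} (hp : -1 < p) (hl : 0 ≤ lam) :
    ∫⁻ h in {h : ℝ | |h| ≤ lam}, ENNReal.ofReal (|h| ^ p)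
      = ENNReal.ofReal (2 * (lam ^ (p + 1) / (p + 1))) := by
  have hset : {h : ℝ | |h| ≤ lam} = Icc (-lam) lam := by ext; simp [abs_le]
  have hint : IntegrableOn (fun x : ℝ => |x| ^ p) (Icc (-lam) lam) :=
    (intervalIntegrable_iff_integrableOn_Icc_of_le (by linarith)).1
      (intervalIntegrable_abs_rpow hp _ _)
  rw [hset, ← ofReal_integral_eq_lintegral_ofReal hint
      (Filter.Eventually.of_forall fun x => rpow_nonneg (abs_nonneg x) p),
    integral_Icc_eq_integral_Ioc, ← intervalIntegral.integral_of_le (by linarith),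
    integral_abs_rpow_neg_self hp hl]

lemma lintegral_sq_exp_sub_one_mul_le {u j : ℝ → ℝ} {b M α lam : ℝ} (hα : α < 2) (hb : 0 ≤ b)
    (hM : 0 ≤ M) (hl : 0 < lam) (hu : ∀ h, |u h| ≤ b * |h|)
    (hj : ∀ h, 0 < |h| → |h| ≤ lam → j h ≤ M * (lam / |h|) ^ α / |h|) :
    ∫⁻ h in {h : ℝ | |h| ≤ lam}, ENNReal.ofReal ((exp (u h) - 1) ^ 2 * j h)
      ≤ ENNReal.ofReal (8 * M * exp (3 * (b * lam)) / (2 - α)) := by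
  set C := M * (b * exp (b * lam)) ^ 2 * lam ^ α
  have hC : 0 ≤ C := by positivity
  have hpointwise : ∀ h ∈ {h : ℝ | |h| ≤ lam},
      (exp (u h) - 1) ^ 2 * j h ≤ C * |h| ^ (1 - α) := by
    intro h hh
    rcases (abs_nonneg h).eq_or_lt with h0 | h0
    · have hu0 : u h = 0 := abs_nonpos_iff.1 (by simpa [← h0] using hu h)
      rw [hu0, exp_zero, sub_self, zero_pow two_ne_zero, zero_mul]
      positivity
    have hexp : |exp (u h) - 1| ≤ b * |h| * exp (b * lam) :=
      (abs_exp_sub_one_le_abs_mul_exp_abs _).trans <| mul_le_mul (hu h)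
        (exp_le_exp.2 ((hu h).trans (mul_le_mul_of_nonneg_left hh hb))) (exp_pos _).le
        (by positivity)
    have hpow : |h| ^ 2 * ((lam / |h|) ^ α / |h|) = lam ^ α * |h| ^ (1 - α) := by
      rw [div_rpow hl.le h0.le, rpow_sub h0, rpow_one]
      field_simp
    calc (exp (u h) - 1) ^ 2 * j h
        ≤ (b * |h| * exp (b * lam)) ^ 2 * (M * (lam / |h|) ^ α / |h|) := by
          refine (mul_le_mul_of_nonneg_left (hj h h0 hh) (sq_nonneg _)).trans ?_
          rw [← sq_abs (exp (u h) - 1)]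
          gcongr
      _ = C * |h| ^ (1 - α) := by
          simp only [C]; linear_combination (M * (b * exp (b * lam)) ^ 2) * hpow
  have hS : MeasurableSet {h : ℝ | |h| ≤ lam} := measurableSet_le (by fun_prop) measurable_const
  have h2α : 0 < 2 - α := by linarith
  have hlam : C * lam ^ (2 - α) = M * (b * lam) ^ 2 * exp (b * lam) ^ 2 := by
    have : lam ^ α * lam ^ (2 - α) = lam ^ 2 := by
      rw [← rpow_add hl, add_sub_cancel, rpow_two]
    simp only [C]
    linear_combination (M * (b * exp (b * lam)) ^ 2) * this
  have hexp3 : exp (3 * (b * lam)) = exp (b * lam) * exp (b * lam) ^ 2 := by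
    rw [← exp_nat_mul, ← exp_add]; ring_nf
  calc ∫⁻ h in {h : ℝ | |h| ≤ lam}, ENNReal.ofReal ((exp (u h) - 1) ^ 2 * j h)
      ≤ ∫⁻ h in {h : ℝ | |h| ≤ lam}, ENNReal.ofReal C * ENNReal.ofReal (|h| ^ (1 - α)) :=
        setLIntegral_mono' hS fun h hh => by
          rw [← ENNReal.ofReal_mul hC]
          exact ENNReal.ofReal_le_ofReal (hpointwise h hh)
    _ = ENNReal.ofReal (C * (2 * (lam ^ (2 - α) / (2 - α)))) := by
        rw [lintegral_const_mul _ (by fun_prop), lintegral_abs_rpow_abs_le (by linarith) hl.le,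
          ← ENNReal.ofReal_mul hC, show 1 - α + 1 = 2 - α by ring]
    _ ≤ ENNReal.ofReal (8 * M * exp (3 * (b * lam)) / (2 - α)) := by
        refine ENNReal.ofReal_le_ofReal ?_
        calc C * (2 * (lam ^ (2 - α) / (2 - α)))
            = 2 * (M * (b * lam) ^ 2 * exp (b * lam) ^ 2) / (2 - α) := by rw [← hlam]; ring
          _ ≤ 2 * (M * (4 * exp (b * lam)) * exp (b * lam) ^ 2) / (2 - α) := by
              gcongr
              exact sq_le_four_mul_exp (by positivity)
          _ = 8 * M * exp (3 * (b * lam)) / (2 - α) := by rw [hexp3]; ring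

lemma sqrt_sum_sq_update_add_sub {ι : Type*} [Fintype ι] [DecidableEq ι] (ξ : ι → ℝ) (i : ι)
    (h : ℝ) : √(∑ j, (update ξ i (ξ i + h) j - ξ j) ^ 2) = |h| := by
  rw [Finset.sum_eq_single i (fun j _ hj => by simp [update_of_ne hj]) (by simp)]
  simp [sqrt_sq_eq_abs]

lemma jumpKernel_update_le {ι : Type*} [DecidableEq ι] {J : (ι → ℝ) → (ι → ℝ) → ℝ}
    {φ : ℝ → ℝ} {Λ C α lam h : ℝ}
    (hJ : ∀ (x y : ι → ℝ) (i : ι), x i ≠ y i → (∀ j, j ≠ i → x j = y j) →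
      J x y ≤ Λ * (|x i - y i| * φ |x i - y i|)⁻¹)
    (hΛ : 0 ≤ Λ) (hφ : ∀ r : ℝ, 0 < r → 0 < φ r)
    (hWS : ∀ r : ℝ, 0 < r → r ≤ lam → φ lam / φ r ≤ C * (lam / r) ^ α)
    (ξ : ι → ℝ) (i : ι) (h0 : 0 < |h|) (hh : |h| ≤ lam) :
    J ξ (update ξ i (ξ i + h)) ≤ Λ * C / φ lam * (lam / |h|) ^ α / |h| := by
  have hφl := hφ lam (h0.trans_le hh)
  have hJh : J ξ (update ξ i (ξ i + h)) ≤ Λ * (|h| * φ |h|)⁻¹ := by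
    simpa [abs_neg] using hJ ξ (update ξ i (ξ i + h)) i (by simpa using h0.ne')
      fun j hj => (update_of_ne hj _ _).symm
  have hscale : (φ |h|)⁻¹ ≤ C * (lam / |h|) ^ α / φ lam := by
    rw [le_div_iff₀ hφl, ← div_eq_inv_mul]
    exact hWS |h| h0 hh
  calc J ξ (update ξ i (ξ i + h)) ≤ Λ * (|h| * φ |h|)⁻¹ := hJh
    _ = Λ * (φ |h|)⁻¹ / |h| := by ring
    _ ≤ Λ * (C * (lam / |h|) ^ α / φ lam) / |h| := by gcongr
    _ = Λ * C / φ lam * (lam / |h|) ^ α / |h| := by ring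

theorem davies_carre_du_champ_bound_general
    (d : ℕ) (hd : 0 < d)
    (αl αu cl Cu Λ : ℝ)
    (hαu : αu < 2)
    (hCu : 1 ≤ Cu) (hΛ : 1 < Λ)
    (φ : ℝ → ℝ)
    (hφ_pos : ∀ r : ℝ, 0 < r → 0 < φ r)
    (hWS : ∀ r R : ℝ, 0 < r → r ≤ R →
      cl * (R / r) ^ αl ≤ φ R / φ r ∧ φ R / φ r ≤ Cu * (R / r) ^ αu)
    (J : (Fin d → ℝ) → (Fin d → ℝ) → ℝ)
    (hJcomp : ∀ (x y : Fin d → ℝ) (i : Fin d), x i ≠ y i →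
      (∀ j, j ≠ i → x j = y j) →
      Λ⁻¹ * (|x i - y i| * φ |x i - y i|)⁻¹ ≤ J x y ∧
      J x y ≤ Λ * (|x i - y i| * φ |x i - y i|)⁻¹) :
    ∃ c : ℝ, 0 < c ∧
      ∀ β lam : ℝ, 0 < β → 0 < lam →
      ∀ χ : (Fin d → ℝ) → ℝ,
        (∀ η ζ : Fin d → ℝ,
          |χ η - χ ζ| ≤ β / 3 * Real.sqrt (∑ i : Fin d, (η i - ζ i) ^ 2)) →
      ∀ ξ : Fin d → ℝ,
        ∑ i : Fin d, ∫⁻ h in {h : ℝ | |h| ≤ lam},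
            ENNReal.ofReal
              ((Real.exp (χ (Function.update ξ i (ξ i + h)) - χ ξ) - 1) ^ 2
                * J ξ (Function.update ξ i (ξ i + h)))
          ≤ ENNReal.ofReal (c * Real.exp (β * lam) / φ lam) := by
  have h2α : 0 < 2 - αu := by linarith
  have hΛ0 : 0 < Λ := by linarith
  have hCu0 : 0 < Cu := by linarith
  refine ⟨8 * d * Λ * Cu / (2 - αu), by positivity, fun β lam hβ hl χ hχ ξ => ?_⟩
  have hφl := hφ_pos lam hl
  have hcoord : ∀ i, ∫⁻ h in {h : ℝ | |h| ≤ lam},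
      ENNReal.ofReal ((exp (χ (update ξ i (ξ i + h)) - χ ξ) - 1) ^ 2
        * J ξ (update ξ i (ξ i + h)))
      ≤ ENNReal.ofReal (8 * (Λ * Cu / φ lam) * exp (β * lam) / (2 - αu)) := fun i => by
    have := lintegral_sq_exp_sub_one_mul_le hαu (b := β / 3) (by positivity) (by positivity) hl
      (fun h => by simpa [sqrt_sum_sq_update_add_sub] using hχ (update ξ i (ξ i + h)) ξ)
      (fun h h0 hh => jumpKernel_update_le (fun x y i hi hj => (hJcomp x y i hi hj).2) hΛ0.le
        hφ_pos (fun r hr hrl => (hWS r lam hr hrl).2) ξ i h0 hh)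
    rwa [show 3 * (β / 3 * lam) = β * lam by ring] at this
  calc _ ≤ ∑ _i : Fin d, ENNReal.ofReal (8 * (Λ * Cu / φ lam) * exp (β * lam) / (2 - αu)) :=
        Finset.sum_le_sum fun i _ => hcoord i
    _ = ENNReal.ofReal (8 * d * Λ * Cu / (2 - αu) * exp (β * lam) / φ lam) := by
        rw [Finset.sum_const, Finset.card_univ, Fintype.card_fin, ← ENNReal.ofReal_nsmul,
          nsmul_eq_mul]
        congr 1
        field_simp

/-- Davies-type carré-du-champ bound: there exists `c > 0` such that for
all `β, λ > 0`, every `χ : ℝ^d → ℝ` with `|χ(η) − χ(ζ)| ≤ (β/3)|η − ζ|` (Euclidean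
distance), and every `ξ ∈ ℝ^d`,
`Σ_{i=1}^d ∫_{|h| ≤ λ} (e^{χ(ξ+heᵢ)−χ(ξ)} − 1)² J(ξ, ξ+heᵢ) dh ≤ c e^{βλ}/φ(λ)`. -/
theorem davies_carre_du_champ_bound
    (d : ℕ) (hd : 0 < d)
    (αl αu cl Cu Λ : ℝ)
    (hαl : 0 < αl) (hαlu : αl ≤ αu) (hαu : αu < 2)
    (hcl : 0 < cl) (hcl1 : cl ≤ 1) (hCu : 1 ≤ Cu) (hΛ : 1 < Λ)
    (φ : ℝ → ℝ)
    (hφ_mono : MonotoneOn φ (Ici 0))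
    (hφ_pos : ∀ r : ℝ, 0 < r → 0 < φ r)
    (hWS : ∀ r R : ℝ, 0 < r → r ≤ R →
      cl * (R / r) ^ αl ≤ φ R / φ r ∧ φ R / φ r ≤ Cu * (R / r) ^ αu)
    (J : (Fin d → ℝ) → (Fin d → ℝ) → ℝ)
    (hJmeas : Measurable (Function.uncurry J))
    (hJsymm : ∀ x y : Fin d → ℝ, J x y = J y x)
    (hJcomp : ∀ (x y : Fin d → ℝ) (i : Fin d), x i ≠ y i →
      (∀ j, j ≠ i → x j = y j) →
      Λ⁻¹ * (|x i - y i| * φ |x i - y i|)⁻¹ ≤ J x y ∧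
      J x y ≤ Λ * (|x i - y i| * φ |x i - y i|)⁻¹)
    (hJzero : ∀ x y : Fin d → ℝ, x ≠ y →
      (¬ ∃ i, x i ≠ y i ∧ ∀ j, j ≠ i → x j = y j) → J x y = 0) :
    ∃ c : ℝ, 0 < c ∧
      ∀ β lam : ℝ, 0 < β → 0 < lam →
      ∀ χ : (Fin d → ℝ) → ℝ,
        (∀ η ζ : Fin d → ℝ,
          |χ η - χ ζ| ≤ β / 3 * Real.sqrt (∑ i : Fin d, (η i - ζ i) ^ 2)) →
      ∀ ξ : Fin d → ℝ,
        ∑ i : Fin d, ∫⁻ h in {h : ℝ | |h| ≤ lam},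
            ENNReal.ofReal
              ((Real.exp (χ (Function.update ξ i (ξ i + h)) - χ ξ) - 1) ^ 2
                * J ξ (Function.update ξ i (ξ i + h)))
          ≤ ENNReal.ofReal (c * Real.exp (β * lam) / φ lam) :=
  davies_carre_du_champ_bound_general d hd αl αu cl Cu Λ hαu hCu hΛ φ hφ_pos hWS J hJcomp
end

section
/- Reduction lemma: let d ≥ 1, l ∈ {0,…,d−1}, q ≥ 0 and C > 0. There exists a constant c > 0, depending only on l, q, d, C and the constants in (WS), with the following property. Let t > 0, set κ := φ⁻¹(t), let 0 ≤ s₁ ≤ s₂ ≤ … ≤ s_d be real numbers with s_{d−l} < (5/2)κ, and define F_i := min(1, t κ/(s_i φ(s_i))) for s_i > 0 and F_i := 1 for s_i = 0. Then every real number P ≥ 0 satisfying P ≤ C κ^{−d} ∏_{i=1}^{d−l} F_i^q · ∏_{i=d−l+1}^{d} F_i also satisfies P ≤ c κ^{−d} ∏_{i=1}^{d} F_i. -/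
/-! On the first `d − l` coordinates `s_i < (5/2) κ`, so the upper half of (WS) gives
`s_i φ(s_i) ≤ M t κ` with `M = (5/2)^{1+ᾱ} C̄`: these factors are bounded below by
`m = min(1, M⁻¹)`. Since `F_i ≤ 1`, each of them satisfies `F_i^q ≤ 1 ≤ m⁻¹ F_i`, so
lowering their exponent from `q` to `1` costs at most the constant `m^{-d}`. -/

open Set

/-- The heat-kernel factor `F = min(1, t κ/(s φ(s)))`, interpreted as `1` when `s = 0`. -/
noncomputable def redFactor (φ : ℝ → ℝ) (t κ s : ℝ) : ℝ :=
  if s = 0 then 1 else min 1 (t * κ / (s * φ s))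

open Finset

section redFactor

variable {φ : ℝ → ℝ} {t κ s : ℝ}

theorem redFactor_le_one : redFactor φ t κ s ≤ 1 := by
  unfold redFactor
  split_ifs
  exacts [le_rfl, min_le_left _ _]

theorem redFactor_nonneg (hφ_pos : ∀ r : ℝ, 0 < r → 0 < φ r) (htκ : 0 ≤ t * κ) (hs : 0 ≤ s) :
    0 ≤ redFactor φ t κ s := by
  unfold redFactor
  split_ifs with h
  · exact zero_le_one
  · have := hφ_pos s (hs.lt_of_ne' h)
    positivity

theorem mul_apply_le_of_le_mul {Cu αu a : ℝ}
    (hφ_pos : ∀ r : ℝ, 0 < r → 0 < φ r) (hφ_mono : MonotoneOn φ (Ici 0))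
    (hWS : ∀ r R : ℝ, 0 < r → r ≤ R → φ R / φ r ≤ Cu * (R / r) ^ αu)
    (hκ : 0 < κ) (ha : 1 ≤ a) (hs : 0 < s) (hsa : s ≤ a * κ) :
    s * φ s ≤ a * Cu * a ^ αu * (κ * φ κ) := by
  have haκ : κ ≤ a * κ := le_mul_of_one_le_left hκ.le ha
  have hφaκ : φ (a * κ) ≤ Cu * a ^ αu * φ κ := by
    have h := hWS κ (a * κ) hκ haκ
    rwa [mul_div_cancel_right₀ a hκ.ne', div_le_iff₀ (hφ_pos κ hκ)] at h
  calc s * φ s ≤ (a * κ) * φ (a * κ) :=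
        mul_le_mul hsa (hφ_mono hs.le (hκ.le.trans haκ) hsa) (hφ_pos s hs).le (by positivity)
    _ ≤ (a * κ) * (Cu * a ^ αu * φ κ) := by gcongr
    _ = a * Cu * a ^ αu * (κ * φ κ) := by ring

theorem min_le_redFactor_of_le_mul {Cu αu a : ℝ}
    (hφ_pos : ∀ r : ℝ, 0 < r → 0 < φ r) (hφ_mono : MonotoneOn φ (Ici 0))
    (hWS : ∀ r R : ℝ, 0 < r → r ≤ R → φ R / φ r ≤ Cu * (R / r) ^ αu)
    (hκ : 0 < κ) (ha : 1 ≤ a) (hs : 0 ≤ s) (hsa : s ≤ a * κ) :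
    min 1 (a * Cu * a ^ αu)⁻¹ ≤ redFactor φ (φ κ) κ s := by
  unfold redFactor
  split_ifs with h
  · exact min_le_left _ _
  · have hs' : 0 < s := hs.lt_of_ne' h
    have hκφ : 0 < φ κ * κ := mul_pos (hφ_pos κ hκ) hκ
    have hsφ : 0 < s * φ s := mul_pos hs' (hφ_pos s hs')
    refine min_le_min_left _ ?_
    calc (a * Cu * a ^ αu)⁻¹ = φ κ * κ / (a * Cu * a ^ αu * (κ * φ κ)) := by
          rw [mul_comm κ, div_mul_cancel_right₀ hκφ.ne']
      _ ≤ φ κ * κ / (s * φ s) :=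
          div_le_div_of_nonneg_left hκφ.le hsφ
            (mul_apply_le_of_le_mul hφ_pos hφ_mono hWS hκ ha hs' hsa)

end redFactor

theorem prod_rpow_mul_prod_le {ι : Type*} (A B : Finset ι) (F : ι → ℝ) {m q : ℝ} {n : ℕ}
    (hm : 0 < m) (hm1 : m ≤ 1) (hq : 0 ≤ q) (hA : #A ≤ n) (hF0 : ∀ i, 0 ≤ F i)
    (hF1 : ∀ i ∈ A, F i ≤ 1) (hFm : ∀ i ∈ A, m ≤ F i) :
    (∏ i ∈ A, F i ^ q) * ∏ i ∈ B, F i ≤ m⁻¹ ^ n * ((∏ i ∈ A, F i) * ∏ i ∈ B, F i) := by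
  have hpointwise : ∀ i ∈ A, F i ^ q ≤ m⁻¹ * F i := fun i hi =>
    calc F i ^ q ≤ 1 := Real.rpow_le_one (hF0 i) (hF1 i hi) hq
      _ = m⁻¹ * m := (inv_mul_cancel₀ hm.ne').symm
      _ ≤ m⁻¹ * F i := by gcongr; exact hFm i hi
  have hprodA : ∏ i ∈ A, F i ^ q ≤ m⁻¹ ^ n * ∏ i ∈ A, F i :=
    calc ∏ i ∈ A, F i ^ q ≤ ∏ i ∈ A, m⁻¹ * F i :=
          prod_le_prod (fun i _ => Real.rpow_nonneg (hF0 i) q) hpointwise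
      _ = m⁻¹ ^ #A * ∏ i ∈ A, F i := by rw [prod_mul_distrib, prod_const]
      _ ≤ m⁻¹ ^ n * ∏ i ∈ A, F i := by
          gcongr
          · exact prod_nonneg fun i _ => hF0 i
          · exact (one_le_inv₀ hm).2 hm1
  calc (∏ i ∈ A, F i ^ q) * ∏ i ∈ B, F i ≤ (m⁻¹ ^ n * ∏ i ∈ A, F i) * ∏ i ∈ B, F i := by
        gcongr
        exact prod_nonneg fun i _ => hF0 i
    _ = m⁻¹ ^ n * ((∏ i ∈ A, F i) * ∏ i ∈ B, F i) := mul_assoc _ _ _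

theorem prod_filter_lt_mul_prod_filter_le {M : Type*} [CommMonoid M] {d : ℕ} (k : ℕ)
    (f : Fin d → M) :
    (∏ i ∈ univ.filter (fun i : Fin d => (i : ℕ) < k), f i) *
      ∏ i ∈ univ.filter (fun i : Fin d => k ≤ (i : ℕ)), f i = ∏ i, f i := by
  simpa only [not_lt] using prod_filter_mul_prod_filter_not univ (fun i : Fin d => (i : ℕ) < k) f

/-- Reduction lemma: there exists `c > 0` (depending only on
`l, q, d, C` and the constants in **(WS)**) such that whenever `t > 0`, `κ = φ⁻¹(t)`,
`0 ≤ s₁ ≤ … ≤ s_d` with `s_{d−l} < (5/2)κ`, every `P ≥ 0` satisfying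
`P ≤ C κ^{−d} ∏_{i=1}^{d−l} F_i^q ∏_{i=d−l+1}^d F_i` also satisfies
`P ≤ c κ^{−d} ∏_{i=1}^d F_i`. -/
theorem reduction_lemma
    (d l : ℕ) (hd : 0 < d)
    (q C : ℝ) (hq : 0 ≤ q) (hC : 0 < C)
    (αl αu cl Cu : ℝ)
    (hCu : 1 ≤ Cu)
    (φ : ℝ → ℝ)
    (hφ_pos : ∀ r : ℝ, 0 < r → 0 < φ r)
    (hφ_smono : StrictMonoOn φ (Ici 0))
    (hWS : ∀ r R : ℝ, 0 < r → r ≤ R →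
      cl * (R / r) ^ αl ≤ φ R / φ r ∧ φ R / φ r ≤ Cu * (R / r) ^ αu)
    (φinv : ℝ → ℝ)
    (hφinv_right : ∀ t : ℝ, 0 ≤ t → φ (φinv t) = t) :
    ∃ c : ℝ, 0 < c ∧
      ∀ t : ℝ, 0 < t →
      ∀ s : Fin d → ℝ, (∀ i, 0 ≤ s i) → (∀ i j : Fin d, i ≤ j → s i ≤ s j) →
        s ⟨d - l - 1, by omega⟩ < 5 / 2 * φinv t →
      ∀ P : ℝ, 0 ≤ P →
        P ≤ C * (φinv t ^ d)⁻¹ *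
            ((∏ i ∈ Finset.univ.filter (fun i : Fin d => (i : ℕ) < d - l),
                redFactor φ t (φinv t) (s i) ^ q) *
              ∏ i ∈ Finset.univ.filter (fun i : Fin d => d - l ≤ (i : ℕ)),
                redFactor φ t (φinv t) (s i)) →
        P ≤ c * (φinv t ^ d)⁻¹ * ∏ i : Fin d, redFactor φ t (φinv t) (s i) := by
  set m : ℝ := min 1 (5 / 2 * Cu * (5 / 2) ^ αu)⁻¹
  have hm : 0 < m := lt_min one_pos (by positivity)
  refine ⟨C * m⁻¹ ^ d, by positivity, fun t ht s hs hs_mono hs_lt P _ hP => ?_⟩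
  set κ := φinv t
  have hκ : 0 < κ := by linarith [hs ⟨d - l - 1, by omega⟩]
  have hφκ : φ κ = t := hφinv_right t ht.le
  have hhead : ∀ i ∈ univ.filter (fun i : Fin d => (i : ℕ) < d - l),
      m ≤ redFactor φ t κ (s i) := by
    intro i hi
    have hi_le : s i ≤ s ⟨d - l - 1, by omega⟩ :=
      hs_mono _ _ (Fin.le_def.2 (Nat.le_sub_one_of_lt (mem_filter.1 hi).2))
    rw [← hφκ]
    exact min_le_redFactor_of_le_mul hφ_pos hφ_smono.monotoneOn
      (fun r R hr hrR => (hWS r R hr hrR).2) hκ (by norm_num) (hs i) (hi_le.trans hs_lt.le)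
  have hreduce := prod_rpow_mul_prod_le _ (univ.filter fun i : Fin d => d - l ≤ (i : ℕ))
    (fun i => redFactor φ t κ (s i)) hm (min_le_left _ _) hq
    ((card_filter_le _ _).trans_eq (card_fin d))
    (fun i => redFactor_nonneg hφ_pos (by positivity) (hs i)) (fun i _ => redFactor_le_one) hhead
  rw [prod_filter_lt_mul_prod_filter_le] at hreduce
  calc P ≤ _ := hP
    _ ≤ C * (κ ^ d)⁻¹ * (m⁻¹ ^ d * ∏ i, redFactor φ t κ (s i)) := by gcongr
    _ = C * m⁻¹ ^ d * (κ ^ d)⁻¹ * ∏ i, redFactor φ t κ (s i) := by ring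
end

section
/- Combinatorial core of the bootstrap step (Lemma Gl): let d ≥ 2, l ∈ {0,…,d−2}, i₀ ∈ {1,…,d−l−1}, let q ∈ [0, 1/(1+α̲)], set b₀ := α̲/(α̲+1) and θ := (α̲/(2+α̲+α̅)) · (Σ_{i=1}^{d−l−i₀} ((α̅+1)/α̲)^i)^{−1}. Then there exists a constant c > 0, depending only on d, q, α̲, α̅, c̲, C̄, such that for every κ > 0 and all integers 1 ≤ n_{i₀} ≤ n_{i₀+1} ≤ … ≤ n_{d−l}, there is an index j₀ ∈ {i₀,…,d−l} with 𝔑(n_{j₀})^{b₀+q} · ∏_{j=j₀+1}^{d−l} 𝔑(n_j)^q ≤ c ∏_{j=i₀}^{d−l} 𝔑(n_j)^{q+θ}, where 𝔑(δ) := φ(κ)/(2^δ φ(2^δ κ)) and empty products equal 1. -/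
/-! Write `L_j = log 𝔑(n_j)`. Averaging the exponents `(b₀ + q) L_{j₀} + q ∑_{j > j₀} L_j` over
`j₀` with weights geometric in `1 + q / b₀`, counted from the top index, gives exactly
`(q + θ) ∑_j L_j` plus `(b₀ - θ ∑_{t ≤ K} (1 + q / b₀)^t) L_{i₀}`, and the choice of `θ` puts
this last coefficient in `[0, b₀]`. As `𝔑 ≤ c̲⁻¹` by (WS), the smallest of the averaged terms is
at most `(q + θ) ∑_j L_j + b₀ log c̲⁻¹`. -/
open Set

/-- `𝔑(δ) = φ(κ)/(2^δ φ(2^δ κ))`. -/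
noncomputable def NNscale (φ : ℝ → ℝ) (κ : ℝ) (δ : ℕ) : ℝ :=
  φ κ / (2 ^ δ * φ (2 ^ δ * κ))

section

open Finset

theorem sum_range_mul_sum_range_comm (u L : ℕ → ℝ) (N : ℕ) :
    ∑ k ∈ range N, u k * ∑ t ∈ range k, L t
      = ∑ t ∈ range N, (∑ k ∈ Ico (t + 1) N, u k) * L t := by
  simp_rw [mul_sum, sum_mul, ← Nat.Ico_zero_eq_range]
  exact (sum_Ico_Ico_comm' 0 N fun t k => u k * L t).symm

def geomWeight (c r : ℝ) (K k : ℕ) : ℝ :=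
  if k < K then c * r ^ k else 1 - c * ∑ t ∈ range K, r ^ t

section geomWeight

variable {c r : ℝ} {K k : ℕ}

theorem sum_range_geomWeight (hk : k ≤ K) :
    ∑ t ∈ range k, geomWeight c r K t = c * ∑ t ∈ range k, r ^ t := by
  rw [mul_sum]
  exact sum_congr rfl fun t ht => if_pos ((mem_range.mp ht).trans_le hk)

theorem sum_range_succ_geomWeight : ∑ t ∈ range (K + 1), geomWeight c r K t = 1 := by
  rw [sum_range_succ, sum_range_geomWeight le_rfl, geomWeight, if_neg (lt_irrefl K)]
  ring

theorem geomWeight_nonneg (hc : 0 ≤ c) (hr : 0 ≤ r) (hK : c * ∑ t ∈ range K, r ^ t ≤ 1) :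
    0 ≤ geomWeight c r K k := by
  unfold geomWeight
  split_ifs
  · positivity
  · linarith

end geomWeight

section defect

variable {b₀ q θ : ℝ} {K k : ℕ}

theorem geomWeight_defect_of_lt (hb₀ : b₀ ≠ 0) (hk : k < K) :
    b₀ * geomWeight (θ / b₀) (1 + q / b₀) K k
        - q * ∑ t ∈ range k, geomWeight (θ / b₀) (1 + q / b₀) K t = θ := by
  rw [sum_range_geomWeight hk.le, geomWeight, if_pos hk]
  have hgeom := geom_sum_mul (1 + q / b₀) k
  rw [add_sub_cancel_left] at hgeom
  linear_combination (1 + q / b₀) ^ k * mul_div_cancel₀ θ hb₀ - θ * hgeom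

theorem geomWeight_defect_self (hb₀ : b₀ ≠ 0) :
    b₀ * geomWeight (θ / b₀) (1 + q / b₀) K K
        - q * ∑ t ∈ range K, geomWeight (θ / b₀) (1 + q / b₀) K t
      = θ + (b₀ - θ * ∑ t ∈ range (K + 1), (1 + q / b₀) ^ t) := by
  rw [sum_range_geomWeight le_rfl, geomWeight, if_neg (lt_irrefl K), sum_range_succ']
  simp_rw [pow_succ']
  rw [← mul_sum]
  linear_combination (-∑ t ∈ range K, (1 + q / b₀) ^ t) * mul_div_cancel₀ θ hb₀

theorem sum_geomWeight_mul_eq (hb₀ : b₀ ≠ 0) (L : ℕ → ℝ) :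
    ∑ k ∈ range (K + 1), geomWeight (θ / b₀) (1 + q / b₀) K k
        * ((b₀ + q) * L k + q * ∑ t ∈ range k, L t)
      = (q + θ) * ∑ t ∈ range (K + 1), L t
        + (b₀ - θ * ∑ t ∈ range (K + 1), (1 + q / b₀) ^ t) * L K := by
  set u := geomWeight (θ / b₀) (1 + q / b₀) K
  have hsplit : ∀ t ∈ range (K + 1),
      u t * ((b₀ + q) * L t) + q * ((∑ k ∈ Ico (t + 1) (K + 1), u k) * L t)
        = (q + θ) * L t + (b₀ * u t - q * ∑ s ∈ range t, u s - θ) * L t := by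
    intro t ht
    have htail := sum_range_add_sum_Ico u (Nat.succ_le_of_lt (mem_range.mp ht))
    rw [sum_range_succ, sum_range_succ_geomWeight] at htail
    linear_combination q * L t * htail
  have hdefect : ∑ t ∈ range (K + 1), (b₀ * u t - q * ∑ s ∈ range t, u s - θ) * L t
      = (b₀ - θ * ∑ t ∈ range (K + 1), (1 + q / b₀) ^ t) * L K := by
    rw [sum_range_succ, geomWeight_defect_self hb₀, add_sub_cancel_left, add_eq_right]
    exact sum_eq_zero fun t ht => by
      rw [geomWeight_defect_of_lt hb₀ (mem_range.mp ht), sub_self, zero_mul]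
  simp only [mul_add, sum_add_distrib, mul_left_comm _ q]
  rw [← mul_sum, sum_range_mul_sum_range_comm, mul_sum, ← sum_add_distrib, sum_congr rfl hsplit,
    sum_add_distrib, ← mul_sum, hdefect]

theorem exists_bootstrap_sum_le (hb₀ : 0 < b₀) (hq : 0 ≤ q) (hθ : 0 ≤ θ) {A : ℝ} (hA : 0 ≤ A)
    (hθK : θ * ∑ t ∈ range (K + 1), (1 + q / b₀) ^ t ≤ b₀) (L : ℕ → ℝ) (hL : L K ≤ A) :
    ∃ k ≤ K, (b₀ + q) * L k + q * ∑ t ∈ range k, L t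
      ≤ b₀ * A + (q + θ) * ∑ t ∈ range (K + 1), L t := by
  set r := 1 + q / b₀
  set u := geomWeight (θ / b₀) r K
  set T := fun k => (b₀ + q) * L k + q * ∑ t ∈ range k, L t
  have hr : 0 ≤ r := by positivity
  have hgeom : 0 ≤ θ * ∑ t ∈ range (K + 1), r ^ t := by positivity
  have hu : ∀ t, 0 ≤ u t := by
    refine fun t => geomWeight_nonneg (div_nonneg hθ hb₀.le) hr ?_
    rw [div_mul_eq_mul_div, div_le_one hb₀]
    refine le_trans (mul_le_mul_of_nonneg_left ?_ hθ) hθK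
    exact sum_le_sum_of_subset_of_nonneg (range_subset_range.mpr K.le_succ) fun _ _ _ => by
      positivity
  obtain ⟨k, hk, hmin⟩ := (range (K + 1)).exists_min_image T nonempty_range_add_one
  refine ⟨k, Nat.lt_succ_iff.mp (mem_range.mp hk), ?_⟩
  calc T k = ∑ t ∈ range (K + 1), u t * T k := by rw [← sum_mul, sum_range_succ_geomWeight, one_mul]
    _ ≤ ∑ t ∈ range (K + 1), u t * T t :=
        sum_le_sum fun t ht => mul_le_mul_of_nonneg_left (hmin t ht) (hu t)
    _ = (q + θ) * ∑ t ∈ range (K + 1), L t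
        + (b₀ - θ * ∑ t ∈ range (K + 1), r ^ t) * L K := sum_geomWeight_mul_eq hb₀.ne' L
    _ ≤ b₀ * A + (q + θ) * ∑ t ∈ range (K + 1), L t := by
        nlinarith [mul_le_mul_of_nonneg_left hL (sub_nonneg.mpr hθK), mul_nonneg hgeom hA]

theorem exists_bootstrap_prod_le (hb₀ : 0 < b₀) (hq : 0 ≤ q) (hθ : 0 ≤ θ) {B : ℝ} (hB : 1 ≤ B)
    (hθK : θ * ∑ t ∈ range (K + 1), (1 + q / b₀) ^ t ≤ b₀) (x : ℕ → ℝ) (hx : ∀ k, 0 < x k)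
    (hxB : x K ≤ B) :
    ∃ k ≤ K, x k ^ (b₀ + q) * ∏ t ∈ range k, x t ^ q
      ≤ B ^ b₀ * ∏ t ∈ range (K + 1), x t ^ (q + θ) := by
  obtain ⟨k, hk, hle⟩ := exists_bootstrap_sum_le hb₀ hq hθ (Real.log_nonneg hB) hθK
    (fun t => Real.log (x t)) (Real.log_le_log (hx K) hxB)
  refine ⟨k, hk, ?_⟩
  simp only [Real.rpow_def_of_pos (hx _), Real.rpow_def_of_pos (zero_lt_one.trans_le hB),
    ← Real.exp_sum, ← Real.exp_add, Real.exp_le_exp, ← sum_mul]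
  linarith

end defect

theorem prod_range_reflect_eq_prod_Icc {M : Type*} [CommMonoid M] (f : ℕ → M) {k m : ℕ}
    (hk : k ≤ m + 1) : ∏ t ∈ range k, f (m - t) = ∏ j ∈ Icc (m + 1 - k) m, f j := by
  rw [← Nat.Ico_zero_eq_range, prod_Ico_reflect f 0 hk, Nat.sub_zero,
    Finset.Ico_add_one_right_eq_Icc]

theorem exists_bootstrap_prod_Icc_le {b₀ q θ B : ℝ} {a m : ℕ} (hb₀ : 0 < b₀) (hq : 0 ≤ q)
    (hθ : 0 ≤ θ) (hB : 1 ≤ B) (ham : a ≤ m)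
    (hθK : θ * ∑ t ∈ range (m - a + 1), (1 + q / b₀) ^ t ≤ b₀) (x : ℕ → ℝ) (hx : ∀ j, 0 < x j)
    (hxB : x a ≤ B) :
    ∃ j₀, a ≤ j₀ ∧ j₀ ≤ m ∧ x j₀ ^ (b₀ + q) * ∏ j ∈ Icc (j₀ + 1) m, x j ^ q
      ≤ B ^ b₀ * ∏ j ∈ Icc a m, x j ^ (q + θ) := by
  obtain ⟨k, hk, hle⟩ := exists_bootstrap_prod_le hb₀ hq hθ hB hθK (fun t => x (m - t))
    (fun _ => hx _) (by rwa [Nat.sub_sub_self ham])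
  refine ⟨m - k, by omega, by omega, ?_⟩
  rwa [prod_range_reflect_eq_prod_Icc (fun j => x j ^ q) (by omega),
    prod_range_reflect_eq_prod_Icc (fun j => x j ^ (q + θ)) (by omega),
    show m + 1 - k = m - k + 1 by omega, show m + 1 - (m - a + 1) = a by omega] at hle

noncomputable def bootstrapTheta (αl αu : ℝ) (K : ℕ) : ℝ :=
  αl / (2 + αl + αu) * (∑ i ∈ Icc 1 K, ((αu + 1) / αl) ^ i)⁻¹

section bootstrapTheta

variable {αl αu : ℝ} {K : ℕ}

theorem bootstrapTheta_nonneg (hαl : 0 < αl) (hαlu : αl ≤ αu) : 0 ≤ bootstrapTheta αl αu K := by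
  have hρ : 0 ≤ (αu + 1) / αl := div_nonneg (by linarith) hαl.le
  exact mul_nonneg (div_nonneg hαl.le (by linarith)) (inv_nonneg.mpr (by positivity))

theorem bootstrapTheta_mul_geom_sum_le {q : ℝ} (hK : 1 ≤ K) (hαl : 0 < αl) (hαlu : αl ≤ αu)
    (hq0 : 0 ≤ q) (hq1 : q ≤ 1 / (1 + αl)) :
    bootstrapTheta αl αu K * ∑ t ∈ range (K + 1), (1 + q / (αl / (αl + 1))) ^ t
      ≤ αl / (αl + 1) := by
  set ρ := (αu + 1) / αl
  set S := ∑ i ∈ Icc 1 K, ρ ^ i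
  set r := 1 + q / (αl / (αl + 1))
  have hρ : 1 ≤ ρ := by rw [le_div_iff₀ hαl]; linarith
  have hr : r ≤ ρ := by
    have hq : q * (1 + αl) ≤ 1 := (le_div_iff₀ (by linarith)).mp hq1
    have hrα : r * αl = αl + q * (αl + 1) := by
      simp only [r]
      field_simp
    rw [le_div_iff₀ hαl, hrα]
    linarith
  have hS : 1 ≤ S := by
    calc 1 ≤ ρ ^ 1 := by rwa [pow_one]
      _ ≤ S := single_le_sum (f := (ρ ^ ·)) (fun i _ => by positivity) (by simp; omega)
  have hsum : ∑ t ∈ range (K + 1), r ^ t ≤ 1 + S := by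
    rw [sum_range_eq_add_Ico _ (by omega : 0 < K + 1), pow_zero,
      Finset.Ico_add_one_right_eq_Icc, add_le_add_iff_left]
    exact sum_le_sum fun i _ => pow_le_pow_left₀ (by positivity) hr i
  set a := αl / (2 + αl + αu)
  have hθ : bootstrapTheta αl αu K = a * S⁻¹ := rfl
  have ha : 0 ≤ a := div_nonneg hαl.le (by linarith)
  calc bootstrapTheta αl αu K * ∑ t ∈ range (K + 1), r ^ t
      ≤ bootstrapTheta αl αu K * (1 + S) :=
        mul_le_mul_of_nonneg_left hsum (bootstrapTheta_nonneg hαl hαlu)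
    _ = a * (S⁻¹ + 1) := by rw [hθ]; field_simp
    _ ≤ a * 2 := by gcongr; linarith [inv_le_one_of_one_le₀ hS]
    _ ≤ αl / (αl + 1) := by
        rw [div_mul_eq_mul_div, div_le_div_iff₀ (by linarith) (by linarith)]
        nlinarith

end bootstrapTheta

section NNscale

variable {φ : ℝ → ℝ} {κ : ℝ}

theorem NNscale_pos (hφ_pos : ∀ r : ℝ, 0 < r → 0 < φ r) (hκ : 0 < κ) (δ : ℕ) :
    0 < NNscale φ κ δ :=
  div_pos (hφ_pos κ hκ) (mul_pos (by positivity) (hφ_pos _ (by positivity)))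

theorem NNscale_le_inv {cl αl : ℝ} (hφ_pos : ∀ r : ℝ, 0 < r → 0 < φ r) (hκ : 0 < κ)
    (hcl : 0 < cl) (hαl : 0 ≤ αl)
    (hWS : ∀ r R : ℝ, 0 < r → r ≤ R → cl * (R / r) ^ αl ≤ φ R / φ r) (δ : ℕ) :
    NNscale φ κ δ ≤ cl⁻¹ := by
  have h2 : (1 : ℝ) ≤ 2 ^ δ := one_le_pow₀ one_le_two
  have hlow := hWS κ (2 ^ δ * κ) hκ (le_mul_of_one_le_left hκ.le h2)
  rw [mul_div_cancel_right₀ _ hκ.ne'] at hlow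
  have hφ2 := hφ_pos (2 ^ δ * κ) (by positivity)
  have hcl_le : cl ≤ 2 ^ δ * φ (2 ^ δ * κ) / φ κ :=
    calc cl ≤ cl * ((2 : ℝ) ^ δ) ^ αl := le_mul_of_one_le_right hcl.le (Real.one_le_rpow h2 hαl)
      _ ≤ φ (2 ^ δ * κ) / φ κ := hlow
      _ ≤ 2 ^ δ * φ (2 ^ δ * κ) / φ κ := by
          gcongr
          · exact (hφ_pos κ hκ).le
          · exact le_mul_of_one_le_left hφ2.le h2
  rw [NNscale, ← inv_div]
  exact inv_anti₀ hcl hcl_le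

end NNscale

end

theorem bootstrap_combinatorial_core_general
    (d l i₀ : ℕ) (hd : 2 ≤ d) (hl : l ≤ d - 2) (hi₀' : i₀ ≤ d - l - 1)
    (αl αu cl Cu : ℝ)
    (hαl : 0 < αl) (hαlu : αl ≤ αu)
    (hcl : 0 < cl) (hcl1 : cl ≤ 1)
    (φ : ℝ → ℝ)
    (hφ_pos : ∀ r : ℝ, 0 < r → 0 < φ r)
    (hWS : ∀ r R : ℝ, 0 < r → r ≤ R →
      cl * (R / r) ^ αl ≤ φ R / φ r ∧ φ R / φ r ≤ Cu * (R / r) ^ αu)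
    (q : ℝ) (hq0 : 0 ≤ q) (hq1 : q ≤ 1 / (1 + αl)) :
    ∃ c : ℝ, 0 < c ∧
      ∀ κ : ℝ, 0 < κ →
      ∀ n : ℕ → ℕ, 1 ≤ n i₀ →
        (∀ j k : ℕ, i₀ ≤ j → j ≤ k → k ≤ d - l → n j ≤ n k) →
        ∃ j₀ : ℕ, i₀ ≤ j₀ ∧ j₀ ≤ d - l ∧
          NNscale φ κ (n j₀) ^ (αl / (αl + 1) + q) *
              ∏ j ∈ Finset.Icc (j₀ + 1) (d - l), NNscale φ κ (n j) ^ q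
            ≤ c * ∏ j ∈ Finset.Icc i₀ (d - l),
                NNscale φ κ (n j) ^
                  (q + αl / (2 + αl + αu) *
                    (∑ i ∈ Finset.Icc 1 (d - l - i₀), ((αu + 1) / αl) ^ i)⁻¹) := by
  refine ⟨cl⁻¹ ^ (αl / (αl + 1)), by positivity, fun κ hκ n _ _ => ?_⟩
  have hθK := bootstrapTheta_mul_geom_sum_le (K := d - l - i₀) (by omega) hαl hαlu hq0 hq1
  have hN_le : ∀ δ, NNscale φ κ δ ≤ cl⁻¹ :=
    NNscale_le_inv hφ_pos hκ hcl hαl.le fun r R hr hrR => (hWS r R hr hrR).1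
  exact exists_bootstrap_prod_Icc_le (div_pos hαl (by linarith)) hq0
    (bootstrapTheta_nonneg hαl hαlu) ((one_le_inv₀ hcl).mpr hcl1) (by omega) hθK
    (fun j => NNscale φ κ (n j)) (fun j => NNscale_pos hφ_pos hκ _) (hN_le _)

/-- Combinatorial core of the bootstrap step (Lemma Gl): with
`b₀ = α̲/(α̲+1)` and `θ = (α̲/(2+α̲+α̅)) (Σ_{i=1}^{d−l−i₀} ((α̅+1)/α̲)^i)⁻¹`, there exists a
constant `c > 0` such that for every `κ > 0` and all integers
`1 ≤ n_{i₀} ≤ … ≤ n_{d−l}` there is `j₀ ∈ {i₀,…,d−l}` with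
`𝔑(n_{j₀})^{b₀+q} ∏_{j=j₀+1}^{d−l} 𝔑(n_j)^q ≤ c ∏_{j=i₀}^{d−l} 𝔑(n_j)^{q+θ}`. -/
theorem bootstrap_combinatorial_core
    (d l i₀ : ℕ) (hd : 2 ≤ d) (hl : l ≤ d - 2) (hi₀ : 1 ≤ i₀) (hi₀' : i₀ ≤ d - l - 1)
    (αl αu cl Cu : ℝ)
    (hαl : 0 < αl) (hαlu : αl ≤ αu) (hαu : αu < 2)
    (hcl : 0 < cl) (hcl1 : cl ≤ 1) (hCu : 1 ≤ Cu)
    (φ : ℝ → ℝ)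
    (hφ_mono : MonotoneOn φ (Ici 0))
    (hφ_pos : ∀ r : ℝ, 0 < r → 0 < φ r)
    (hWS : ∀ r R : ℝ, 0 < r → r ≤ R →
      cl * (R / r) ^ αl ≤ φ R / φ r ∧ φ R / φ r ≤ Cu * (R / r) ^ αu)
    (q : ℝ) (hq0 : 0 ≤ q) (hq1 : q ≤ 1 / (1 + αl)) :
    ∃ c : ℝ, 0 < c ∧
      ∀ κ : ℝ, 0 < κ →
      ∀ n : ℕ → ℕ, 1 ≤ n i₀ →
        (∀ j k : ℕ, i₀ ≤ j → j ≤ k → k ≤ d - l → n j ≤ n k) →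
        ∃ j₀ : ℕ, i₀ ≤ j₀ ∧ j₀ ≤ d - l ∧
          NNscale φ κ (n j₀) ^ (αl / (αl + 1) + q) *
              ∏ j ∈ Finset.Icc (j₀ + 1) (d - l), NNscale φ κ (n j) ^ q
            ≤ c * ∏ j ∈ Finset.Icc i₀ (d - l),
                NNscale φ κ (n j) ^
                  (q + αl / (2 + αl + αu) *
                    (∑ i ∈ Finset.Icc 1 (d - l - i₀), ((αu + 1) / αl) ^ i)⁻¹) :=
  bootstrap_combinatorial_core_general d l i₀ hd hl hi₀' αl αu cl Cu hαl hαlu hcl hcl1 φ hφ_pos hWS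
    q hq0 hq1
end
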